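/- If U ∈ ℝ^{2n×2k} is both symplectic (U^T J_n U = J_k) and has orthonormal columns (U^T U = I), then U† = J_k^{-1}U^T J_n equals U^T, and hence for any Hamiltonian matrix H the projected matrix F = U^T H U is Hamiltonian. -/

import Mathlib

/-!
Symplecticity and orthonormality of the columns say that `J_n U` and `U J_k` both have
orthonormal columns and that their mutual Gram matrix `(J_n U)ᵀ (U J_k)` is the identity.
Hence `(J_n U - U J_k)ᵀ (J_n U - U J_k) = 0`, so `J_n U = U J_k`. Transposing gives
`Uᵀ J_n = J_k Uᵀ`, from which `J_k⁻¹ Uᵀ J_n = Uᵀ`, and conjugating the Hamiltonian identity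
`Hᵀ = J_n H J_n` by `U` yields the one for `Uᵀ H U`.
-/

open Matrix

noncomputable def Jmat (n : ℕ) : Matrix (Fin n ⊕ Fin n) (Fin n ⊕ Fin n) ℝ :=
  Matrix.fromBlocks 0 1 (-1) 0

namespace Matrix

variable {m n R : Type*} [Fintype m] [CommRing R] [LinearOrder R] [IsStrictOrderedRing R]

theorem transpose_mul_self_eq_zero {A : Matrix m n R} : Aᵀ * A = 0 ↔ A = 0 := by
  refine ⟨fun h => Matrix.ext fun i j => ?_, fun h => by simp [h]⟩
  have hcol : (fun i => A i j) ⬝ᵥ (fun i => A i j) = 0 := congr_fun (congr_fun h j) j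
  exact congr_fun (dotProduct_self_eq_zero.1 hcol) i

theorem eq_of_transpose_mul_eq_one [DecidableEq n] {A B : Matrix m n R}
    (hA : Aᵀ * A = 1) (hB : Bᵀ * B = 1) (hAB : Aᵀ * B = 1) : A = B := by
  have hBA : Bᵀ * A = 1 := by rw [← transpose_transpose A, ← transpose_mul, hAB, transpose_one]
  rw [← sub_eq_zero, ← transpose_mul_self_eq_zero]
  simp only [transpose_sub, Matrix.sub_mul, Matrix.mul_sub, hA, hB, hAB, hBA, sub_self]

end Matrix

theorem Jmat_mul_self (m : ℕ) : Jmat m * Jmat m = -1 := by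
  rw [Jmat, fromBlocks_multiply, ← fromBlocks_one, fromBlocks_neg]
  simp

theorem Jmat_transpose (m : ℕ) : (Jmat m)ᵀ = -Jmat m := by
  rw [Jmat, fromBlocks_transpose, fromBlocks_neg]
  simp

theorem Jmat_transpose_mul_self (m : ℕ) : (Jmat m)ᵀ * Jmat m = 1 := by
  rw [Jmat_transpose, neg_mul, Jmat_mul_self, neg_neg]

theorem inv_Jmat_mul_self (m : ℕ) : (Jmat m)⁻¹ * Jmat m = 1 :=
  nonsing_inv_mul _ <| isUnit_det_of_left_inverse (Jmat_transpose_mul_self m)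

def IsHamiltonian {m : ℕ} (H : Matrix (Fin m ⊕ Fin m) (Fin m ⊕ Fin m) ℝ) : Prop :=
  Hᵀ = Jmat m * H * Jmat m

section

variable {n k : ℕ} {U : Matrix (Fin n ⊕ Fin n) (Fin k ⊕ Fin k) ℝ}

theorem Jmat_mul_eq_mul_Jmat (hsymp : Uᵀ * Jmat n * U = Jmat k) (horth : Uᵀ * U = 1) :
    Jmat n * U = U * Jmat k := by
  apply eq_of_transpose_mul_eq_one
  · rw [transpose_mul, Matrix.mul_assoc, ← Matrix.mul_assoc (Jmat n)ᵀ, Jmat_transpose_mul_self,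
      Matrix.one_mul, horth]
  · rw [transpose_mul, Matrix.mul_assoc, ← Matrix.mul_assoc Uᵀ, horth, Matrix.one_mul,
      Jmat_transpose_mul_self]
  · rw [transpose_mul, Jmat_transpose, Matrix.mul_neg, Matrix.neg_mul, ← Matrix.mul_assoc, hsymp,
      Jmat_mul_self, neg_neg]

theorem transpose_mul_Jmat_eq_Jmat_mul_transpose (h : Jmat n * U = U * Jmat k) :
    Uᵀ * Jmat n = Jmat k * Uᵀ := by
  have := congrArg (- transpose ·) h
  simpa only [transpose_mul, Jmat_transpose, Matrix.mul_neg, Matrix.neg_mul, neg_neg] using this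

theorem IsHamiltonian.transpose_mul_mul (h : Jmat n * U = U * Jmat k)
    {H : Matrix (Fin n ⊕ Fin n) (Fin n ⊕ Fin n) ℝ} (hH : IsHamiltonian H) :
    IsHamiltonian (Uᵀ * H * U) := by
  calc (Uᵀ * H * U)ᵀ = Uᵀ * Jmat n * H * (Jmat n * U) := by
        rw [transpose_mul, transpose_mul, transpose_transpose, hH]; simp only [Matrix.mul_assoc]
    _ = Jmat k * (Uᵀ * H * U) * Jmat k := by
        rw [transpose_mul_Jmat_eq_Jmat_mul_transpose h, h]; simp only [Matrix.mul_assoc]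

end

theorem stmt19 (n k : ℕ) (U : Matrix (Fin n ⊕ Fin n) (Fin k ⊕ Fin k) ℝ)
    (hsymp : Uᵀ * Jmat n * U = Jmat k) (horth : Uᵀ * U = 1) :
    (Jmat k)⁻¹ * Uᵀ * Jmat n = Uᵀ ∧
    ∀ H : Matrix (Fin n ⊕ Fin n) (Fin n ⊕ Fin n) ℝ, Hᵀ = Jmat n * H * Jmat n →
      (Uᵀ * H * U)ᵀ = Jmat k * (Uᵀ * H * U) * Jmat k := by
  have hcomm := Jmat_mul_eq_mul_Jmat hsymp horth
  refine ⟨?_, fun H hH => IsHamiltonian.transpose_mul_mul hcomm hH⟩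
  rw [Matrix.mul_assoc, transpose_mul_Jmat_eq_Jmat_mul_transpose hcomm, ← Matrix.mul_assoc,
    inv_Jmat_mul_self, Matrix.one_mul]
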